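/- Let S be a proper sampling over [n] with probability matrix P and probability vector p (p_i > 0), and suppose v ∈ ℝ^n satisfies P − p pᵀ ⪯ Diag(p₁v₁, …, p_n v_n). Then for any vectors ζ₁, …, ζ_n ∈ ℝ^d with average ζ̄ = (1/n)Σζ_i, E[‖Σ_{i∈S} ζ_i/(n p_i) − ζ̄‖²] ≤ (1/n²)·Σ_{i=1}^n (v_i/p_i)·‖ζ_i‖². -/

import Mathlib

/-!
Writing `x i = ζ i / (n p i)`, the estimator is `X_S = ∑_{i ∈ S} x i`, whose mean is
`∑ i, p i x i = ζ̄`. Its variance is therefore `E‖X_S‖² - ‖ζ̄‖² = ∑ i j, (P - p pᵀ) i j ⟪x i, x j⟫`.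
A matrix inequality `A ⪯ B` gives `∑ A i j ⟪x i, x j⟫ ≤ ∑ B i j ⟪x i, x j⟫` by the Schur product
theorem applied to `B - A` and the Gram matrix of `x`, and for `B = Diag(p v)` the right-hand side
is `∑ p i v i ‖x i‖²`, which is the claimed bound.
-/

open Finset Matrix
open scoped RealInnerProductSpace

variable {E : Type*} [NormedAddCommGroup E] [InnerProductSpace ℝ E]

theorem sum_mul_norm_sub_sum_smul_sq {σ : Type*} [Fintype σ] (w : σ → ℝ) (hw : ∑ s, w s = 1)
    (X : σ → E) :
    ∑ s, w s * ‖X s - ∑ t, w t • X t‖ ^ 2 = ∑ s, w s * ‖X s‖ ^ 2 - ‖∑ t, w t • X t‖ ^ 2 := by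
  set m := ∑ t, w t • X t
  have hcross : ∑ s, w s * ⟪X s, m⟫ = ‖m‖ ^ 2 := by
    simp only [← real_inner_self_eq_norm_sq, m, ← real_inner_smul_left, ← sum_inner]
  simp only [norm_sub_sq_real, mul_add, mul_sub, sum_add_distrib, sum_sub_distrib, ← sum_mul,
    hw, mul_left_comm _ (2 : ℝ), ← mul_sum, hcross]
  ring

theorem norm_sum_smul_sq {ι : Type*} [Fintype ι] (p : ι → ℝ) (x : ι → E) :
    ‖∑ i, p i • x i‖ ^ 2 = ∑ i, ∑ j, p i * p j * ⟪x i, x j⟫ := by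
  simp_rw [← real_inner_self_eq_norm_sq, sum_inner, inner_sum, real_inner_smul_left,
    real_inner_smul_right, mul_assoc]

theorem sum_smul_sum_mem_eq_sum_smul {σ α M : Type*} [Fintype σ] [Fintype α] [DecidableEq α]
    [AddCommGroup M] [Module ℝ M] (w : σ → ℝ) (t : σ → Finset α) (x : α → M) :
    ∑ s, w s • ∑ a ∈ t s, x a = ∑ a, (∑ s, if a ∈ t s then w s else 0) • x a := by
  simp only [sum_smul, ite_smul, zero_smul, smul_sum]
  rw [sum_comm]
  simp [sum_ite_mem]

section Sampling

variable {ι : Type*} [Fintype ι] [DecidableEq ι]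

def probMatrix (w : Finset ι → ℝ) : Matrix ι ι ℝ :=
  of fun i j => ∑ s, if i ∈ s ∧ j ∈ s then w s else 0

def probVector (w : Finset ι → ℝ) : ι → ℝ :=
  fun i => ∑ s, if i ∈ s then w s else 0

theorem sum_smul_sum_mem (w : Finset ι → ℝ) (x : ι → E) :
    ∑ s, w s • ∑ i ∈ s, x i = ∑ i, probVector w i • x i :=
  sum_smul_sum_mem_eq_sum_smul w id x

theorem sum_mul_sum_mem_sum_mem (w : Finset ι → ℝ) (f : ι → ι → ℝ) :
    ∑ s, w s * ∑ i ∈ s, ∑ j ∈ s, f i j = ∑ i, ∑ j, probMatrix w i j * f i j := by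
  conv_lhs =>
    simp only [← sum_product', ← smul_eq_mul, sum_smul_sum_mem_eq_sum_smul, mem_product]
  rw [Fintype.sum_prod_type]
  rfl

theorem sum_mul_norm_sum_mem_sq (w : Finset ι → ℝ) (x : ι → E) :
    ∑ s, w s * ‖∑ i ∈ s, x i‖ ^ 2 = ∑ i, ∑ j, probMatrix w i j * ⟪x i, x j⟫ := by
  simp_rw [← real_inner_self_eq_norm_sq, sum_inner, inner_sum]
  exact sum_mul_sum_mem_sum_mem w _

theorem sum_mul_norm_sum_mem_sub_sq (w : Finset ι → ℝ) (hw : ∑ s, w s = 1) (x : ι → E) :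
    ∑ s, w s * ‖∑ i ∈ s, x i - ∑ i, probVector w i • x i‖ ^ 2
      = ∑ i, ∑ j, (probMatrix w - vecMulVec (probVector w) (probVector w)) i j * ⟪x i, x j⟫ := by
  rw [← sum_smul_sum_mem, sum_mul_norm_sub_sum_smul_sq w hw, sum_mul_norm_sum_mem_sq,
    sum_smul_sum_mem, norm_sum_smul_sq, ← sum_sub_distrib]
  simp only [Matrix.sub_apply, vecMulVec_apply, sub_mul, sum_sub_distrib]

end Sampling

section Gram

variable {ι : Type*} [Fintype ι]

theorem sum_mul_inner_nonneg_of_posSemidef {A : Matrix ι ι ℝ} (hA : A.PosSemidef) (x : ι → E) :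
    0 ≤ ∑ i, ∑ j, A i j * ⟪x i, x j⟫ := by
  simpa [dotProduct, mulVec, hadamard_apply, gram_apply, mul_sum] using
    (hA.hadamard (posSemidef_gram ℝ x)).dotProduct_mulVec_nonneg 1

theorem sum_mul_inner_le_of_posSemidef_sub {A B : Matrix ι ι ℝ} (h : (B - A).PosSemidef)
    (x : ι → E) : ∑ i, ∑ j, A i j * ⟪x i, x j⟫ ≤ ∑ i, ∑ j, B i j * ⟪x i, x j⟫ := by
  simpa only [Matrix.sub_apply, sub_mul, sum_sub_distrib, sub_nonneg] using
    sum_mul_inner_nonneg_of_posSemidef h x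

theorem sum_diagonal_mul_inner [DecidableEq ι] (d : ι → ℝ) (x : ι → E) :
    ∑ i, ∑ j, diagonal d i j * ⟪x i, x j⟫ = ∑ i, d i * ‖x i‖ ^ 2 := by
  simp [diagonal_apply, ite_mul]

end Gram

theorem subsampled_estimator_variance_bound_general {n d : ℕ}
    (w : Finset (Fin n) → ℝ)
    (hsum : ∑ s : Finset (Fin n), w s = 1)
    (P : Matrix (Fin n) (Fin n) ℝ)
    (hP : ∀ i j, P i j = ∑ s : Finset (Fin n), if i ∈ s ∧ j ∈ s then w s else 0)
    (p : Fin n → ℝ)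
    (hp : ∀ i, p i = ∑ s : Finset (Fin n), if i ∈ s then w s else 0)
    (hproper : ∀ i, 0 < p i)
    (v : Fin n → ℝ)
    (hv : (Matrix.diagonal (fun i => p i * v i) - (P - Matrix.vecMulVec p p)).PosSemidef)
    (ζ : Fin n → EuclideanSpace ℝ (Fin d))
    (ζbar : EuclideanSpace ℝ (Fin d)) (hζbar : ζbar = (1 / (n : ℝ)) • ∑ i, ζ i) :
    ∑ s : Finset (Fin n), w s * ‖(∑ i ∈ s, (1 / ((n : ℝ) * p i)) • ζ i) - ζbar‖ ^ 2
      ≤ (1 / (n : ℝ) ^ 2) * ∑ i, (v i / p i) * ‖ζ i‖ ^ 2 := by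
  obtain rfl : P = probMatrix w := Matrix.ext hP
  obtain rfl : p = probVector w := funext hp
  set x : Fin n → EuclideanSpace ℝ (Fin d) := fun i => (1 / ((n : ℝ) * probVector w i)) • ζ i
  have hmean : ζbar = ∑ i, probVector w i • x i := by
    rw [hζbar, smul_sum]
    refine sum_congr rfl fun i _ => ?_
    rw [smul_smul, mul_one_div, div_mul_cancel_right₀ (hproper i).ne', one_div]
  rw [hmean, sum_mul_norm_sum_mem_sub_sq w hsum x]
  calc _ ≤ ∑ i, ∑ j, diagonal (fun i => probVector w i * v i) i j * ⟪x i, x j⟫ :=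
        sum_mul_inner_le_of_posSemidef_sub hv x
    _ = _ := by
      rw [sum_diagonal_mul_inner, mul_sum]
      refine sum_congr rfl fun i _ => ?_
      have := (hproper i).ne'
      simp only [x, norm_smul, mul_pow, Real.norm_eq_abs, sq_abs]
      field_simp

/-- For a proper sampling `S` over `[n]` (modeled by a probability
mass function `w` on subsets of `Fin n`) with probability matrix `P` and probability
vector `p`, if `v ∈ ℝ^n` satisfies `P − p pᵀ ⪯ Diag(p₁v₁, …, p_n v_n)`, then for any
vectors `ζ₁, …, ζ_n ∈ ℝ^d` with average `ζ̄`,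
`E‖Σ_{i∈S} ζ_i/(n p_i) − ζ̄‖² ≤ (1/n²) Σᵢ (v_i/p_i) ‖ζ_i‖²`. -/
theorem subsampled_estimator_variance_bound {n d : ℕ} (hn : 1 ≤ n)
    (w : Finset (Fin n) → ℝ) (hw : ∀ s, 0 ≤ w s)
    (hsum : ∑ s : Finset (Fin n), w s = 1)
    (P : Matrix (Fin n) (Fin n) ℝ)
    (hP : ∀ i j, P i j = ∑ s : Finset (Fin n), if i ∈ s ∧ j ∈ s then w s else 0)
    (p : Fin n → ℝ)
    (hp : ∀ i, p i = ∑ s : Finset (Fin n), if i ∈ s then w s else 0)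
    (hproper : ∀ i, 0 < p i)
    (v : Fin n → ℝ)
    (hv : (Matrix.diagonal (fun i => p i * v i) - (P - Matrix.vecMulVec p p)).PosSemidef)
    (ζ : Fin n → EuclideanSpace ℝ (Fin d))
    (ζbar : EuclideanSpace ℝ (Fin d)) (hζbar : ζbar = (1 / (n : ℝ)) • ∑ i, ζ i) :
    ∑ s : Finset (Fin n), w s * ‖(∑ i ∈ s, (1 / ((n : ℝ) * p i)) • ζ i) - ζbar‖ ^ 2
      ≤ (1 / (n : ℝ) ^ 2) * ∑ i, (v i / p i) * ‖ζ i‖ ^ 2 :=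
  subsampled_estimator_variance_bound_general w hsum P hP p hp hproper v hv ζ ζbar hζbar
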